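/- arXiv:1312.6777 — 2 statements merged into one kernel-verified Lean document; each statement's English description precedes it below -/
import Mathlib

section
/- Let T : H → K be a bounded surjective linear operator between Hilbert spaces and let P be the orthogonal projection of H onto (ker T)ᗮ. Then for all f, g ∈ H, ⟨P f, g⟩ = ⟨(T T*)⁻¹ T f, T g⟩. -/
open ContinuousLinearMap
open scoped InnerProductSpace

/-! `P f` and `T* S T f` both lie in `(ker T)ᗮ` and have the same image `T f` under `T`, hence
coincide; the identity is then the defining property of the adjoint. -/

theorem Submodule.eq_of_mem_orthogonal_of_sub_mem {𝕜 E : Type*} [RCLike 𝕜]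
    [NormedAddCommGroup E] [InnerProductSpace 𝕜 E] {K : Submodule 𝕜 E} {u v : E}
    (hu : u ∈ Kᗮ) (hv : v ∈ Kᗮ) (huv : u - v ∈ K) : u = v :=
  sub_eq_zero.mp <| (Submodule.mem_bot 𝕜).mp <|
    K.inf_orthogonal_eq_bot ▸ ⟨huv, Kᗮ.sub_mem hu hv⟩

theorem ContinuousLinearMap.adjoint_apply_mem_orthogonal_ker {𝕜 E F : Type*} [RCLike 𝕜]
    [NormedAddCommGroup E] [InnerProductSpace 𝕜 E] [CompleteSpace E]
    [NormedAddCommGroup F] [InnerProductSpace 𝕜 F] [CompleteSpace F]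
    (T : E →L[𝕜] F) (y : F) : adjoint T y ∈ (LinearMap.ker (T : E →ₗ[𝕜] F))ᗮ := by
  intro x hx
  rw [adjoint_inner_right, ← coe_coe, LinearMap.mem_ker.mp hx, inner_zero_left]

theorem orthogonalProjection_ker_orthogonal_eq_general
    {H K : Type*} [NormedAddCommGroup H] [InnerProductSpace ℂ H] [CompleteSpace H]
    [NormedAddCommGroup K] [InnerProductSpace ℂ K] [CompleteSpace K]
    (T : H →L[ℂ] K)
    (S : K →L[ℂ] K)
    (hS1 : (T ∘L (adjoint T)) ∘L S = 1)
    (P : H →L[ℂ] H)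
    (hP1 : ∀ x, P x ∈ (LinearMap.ker (T : H →ₗ[ℂ] K))ᗮ)
    (hP2 : ∀ x, x - P x ∈ ((LinearMap.ker (T : H →ₗ[ℂ] K))ᗮ)ᗮ) :
    ∀ f g : H, ⟪P f, g⟫_ℂ = ⟪S (T f), T g⟫_ℂ := by
  intro f g
  have hker : f - P f ∈ LinearMap.ker (T : H →ₗ[ℂ] K) :=
    Submodule.orthogonal_orthogonal (LinearMap.ker (T : H →ₗ[ℂ] K)) ▸ hP2 f
  have hTP : T (P f) = T f := (LinearMap.sub_mem_ker_iff.mp hker).symm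
  have hTTadj : T (adjoint T (S (T f))) = T f := congr($hS1 (T f))
  have hP : P f = adjoint T (S (T f)) :=
    Submodule.eq_of_mem_orthogonal_of_sub_mem (hP1 f) (T.adjoint_apply_mem_orthogonal_ker _)
      (LinearMap.sub_mem_ker_iff.mpr (hTP.trans hTTadj.symm))
  rw [hP, adjoint_inner_left]

/-- If `T : H → K` is bounded and surjective, `S` is the (continuous) inverse of `T T*`,
and `P` is the orthogonal projection of `H` onto `(ker T)ᗮ`, then
`⟨P f, g⟩ = ⟨(T T*)⁻¹ T f, T g⟩` for all `f, g ∈ H`. -/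
theorem orthogonalProjection_ker_orthogonal_eq
    {H K : Type*} [NormedAddCommGroup H] [InnerProductSpace ℂ H] [CompleteSpace H]
    [NormedAddCommGroup K] [InnerProductSpace ℂ K] [CompleteSpace K]
    (T : H →L[ℂ] K) (hT : Function.Surjective T)
    (S : K →L[ℂ] K)
    (hS1 : (T ∘L (adjoint T)) ∘L S = 1) (hS2 : S ∘L (T ∘L (adjoint T)) = 1)
    (P : H →L[ℂ] H)
    (hP1 : ∀ x, P x ∈ (LinearMap.ker (T : H →ₗ[ℂ] K))ᗮ)
    (hP2 : ∀ x, x - P x ∈ ((LinearMap.ker (T : H →ₗ[ℂ] K))ᗮ)ᗮ) :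
    ∀ f g : H, ⟪P f, g⟫_ℂ = ⟪S (T f), T g⟫_ℂ :=
  orthogonalProjection_ker_orthogonal_eq_general T S hS1 P hP1 hP2
end

section
/- Let T : H → K be a bounded operator between Hilbert spaces whose range N = ran T is closed and of finite codimension in K. Define G : K → K by G = (T T*)|_N ⊕ I on the orthogonal decomposition K = N ⊕ Nᗮ (i.e., G x = T T* x for x ∈ N and G x = x for x ∈ Nᗮ). Then G is invertible and for all f, g ∈ H, ⟨P f, g⟩ = ⟨G⁻¹ T f, T g⟩, where P is the orthogonal projection of H onto (ker T)ᗮ. -/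
open ContinuousLinearMap
open scoped InnerProductSpace

/-!
Write `N` for the range of `T` and `Q` for the orthogonal projection onto `Nᗮ`. Since
`ker T* = Nᗮ`, the block operator is `G = T T* + Q`, so
`re ⟪G x, x⟫ = ‖T* x‖² + ‖Q x‖²`.
Closedness of `N` makes `T*` bounded below on `N` (open mapping theorem), hence `G` is coercive
and therefore invertible. If `G u = T f`, then `Q u ∈ N ∩ Nᗮ` vanishes, so `T T* u = T f`; as
`T* u ∈ (ker T)ᗮ`, this says `T* u = P f`, and `⟪P f, g⟫ = ⟪T* u, g⟫ = ⟪u, T g⟫`.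
-/

namespace ContinuousLinearMap

variable {𝕜 E F : Type*} [RCLike 𝕜]
  [NormedAddCommGroup E] [InnerProductSpace 𝕜 E] [CompleteSpace E]
  [NormedAddCommGroup F] [InnerProductSpace 𝕜 F] [CompleteSpace F]
  (T : E →L[𝕜] F)

theorem exists_norm_le_mul_norm_adjoint_of_mem_range [CompleteSpace T.range] :
    ∃ C > 0, ∀ y ∈ T.range, ‖y‖ ≤ C * ‖adjoint T y‖ := by
  obtain ⟨C, hC0, hC⟩ :=
    T.rangeRestrict.exists_preimage_norm_le T.toLinearMap.surjective_rangeRestrict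
  refine ⟨C, hC0, fun y hy => ?_⟩
  obtain ⟨x, hxy, hx⟩ := hC ⟨y, hy⟩
  replace hxy : T x = y := congrArg Subtype.val hxy
  replace hx : ‖x‖ ≤ C * ‖y‖ := hx
  have key : ‖y‖ * ‖y‖ ≤ C * ‖adjoint T y‖ * ‖y‖ :=
    calc ‖y‖ * ‖y‖ = RCLike.re ⟪adjoint T y, x⟫_𝕜 := by
          rw [adjoint_inner_left, hxy, ← sq, inner_self_eq_norm_sq]
      _ ≤ ‖adjoint T y‖ * ‖x‖ := re_inner_le_norm _ _
      _ ≤ C * ‖adjoint T y‖ * ‖y‖ := by nlinarith [norm_nonneg (adjoint T y)]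
  rcases (norm_nonneg y).eq_or_lt with hy0 | hy0
  · rw [← hy0]; positivity
  · exact le_of_mul_le_mul_right key hy0

theorem adjoint_starProjection_orthogonal_range (x : F) :
    adjoint T (T.rangeᗮ.starProjection x) = 0 :=
  T.orthogonal_range.le (T.rangeᗮ.starProjection_apply_mem x)

theorem eq_self_comp_adjoint_add_starProjection [CompleteSpace T.range] {G : F →L[𝕜] F}
    (h₁ : ∀ x ∈ T.range, G x = T (adjoint T x)) (h₂ : ∀ x ∈ T.rangeᗮ, G x = x) :
    G = T ∘L adjoint T + T.rangeᗮ.starProjection := by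
  ext x
  have hx : x - T.rangeᗮ.starProjection x ∈ T.range := by
    rw [Submodule.starProjection_orthogonal_val, sub_sub_cancel]
    exact T.range.starProjection_apply_mem x
  calc G x = G (x - T.rangeᗮ.starProjection x) + G (T.rangeᗮ.starProjection x) := by
        rw [← map_add, sub_add_cancel]
    _ = T (adjoint T x) + T.rangeᗮ.starProjection x := by
        rw [h₁ _ hx, h₂ _ (Submodule.starProjection_apply_mem _ x), map_sub,
          adjoint_starProjection_orthogonal_range, sub_zero]

theorem isUnit_self_comp_adjoint_add_starProjection [CompleteSpace T.range] :
    IsUnit (T ∘L adjoint T + T.rangeᗮ.starProjection) := by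
  obtain ⟨C, -, hC⟩ := T.exists_norm_le_mul_norm_adjoint_of_mem_range
  refine isUnit_of_forall_le_norm_inner_map _ (c := (C ^ 2 + 1)⁻¹.toNNReal)
    (Real.toNNReal_pos.mpr (by positivity)) fun x => ?_
  set G := T ∘L adjoint T + T.rangeᗮ.starProjection with hG
  have hre : RCLike.re ⟪G x, x⟫_𝕜 =
      ‖adjoint T x‖ ^ 2 + ‖T.rangeᗮ.orthogonalProjectionOnto x‖ ^ 2 := by
    rw [hG, add_apply, inner_add_left, map_add, comp_apply, ← adjoint_inner_right,
      inner_self_eq_norm_sq, Submodule.re_inner_starProjection_eq_normSq]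
  have hP : ‖T.range.orthogonalProjectionOnto x‖ ≤ C * ‖adjoint T x‖ := by
    have hx := T.range.starProjection_add_starProjection_orthogonal x
    calc ‖T.range.orthogonalProjectionOnto x‖
        ≤ C * ‖adjoint T (T.range.starProjection x)‖ :=
          hC _ (T.range.starProjection_apply_mem x)
      _ = C * ‖adjoint T x‖ := by
          conv_rhs => rw [← hx, map_add, adjoint_starProjection_orthogonal_range, add_zero]
  have hpyth := T.range.norm_sq_eq_add_norm_sq_projection x
  rw [Real.coe_toNNReal _ (by positivity), ← div_eq_mul_inv, div_le_iff₀ (by positivity)]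
  calc ‖x‖ ^ 2 ≤ (C ^ 2 + 1) * RCLike.re ⟪G x, x⟫_𝕜 := by
        rw [hpyth, hre]
        nlinarith [mul_self_le_mul_self (norm_nonneg _) hP, sq_nonneg ‖adjoint T x‖,
          sq_nonneg ‖T.rangeᗮ.orthogonalProjectionOnto x‖, sq_nonneg C]
    _ ≤ ‖⟪G x, x⟫_𝕜‖ * (C ^ 2 + 1) := by
        rw [mul_comm]
        gcongr
        exact RCLike.re_le_norm _

theorem apply_adjoint_eq_of_self_comp_adjoint_add_starProjection_eq {u : F} {v : E}
    (h : (T ∘L adjoint T + T.rangeᗮ.starProjection) u = T v) : T (adjoint T u) = T v := by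
  have hQ : T.rangeᗮ.starProjection u = T v - T (adjoint T u) := by
    rw [← h, add_apply, comp_apply, add_sub_cancel_left]
  have hQ_mem : T.rangeᗮ.starProjection u ∈ T.range ⊓ T.rangeᗮ :=
    ⟨hQ ▸ sub_mem (T.mem_range_self v) (T.mem_range_self _),
      Submodule.starProjection_apply_mem _ u⟩
  rw [T.range.inf_orthogonal_eq_bot, Submodule.mem_bot, hQ, sub_eq_zero] at hQ_mem
  exact hQ_mem.symm

theorem adjoint_apply_eq_starProjection_orthogonal_ker {u : F} {v : E}
    (h : T (adjoint T u) = T v) : adjoint T u = T.kerᗮ.starProjection v := by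
  refine (Submodule.eq_starProjection_of_mem_orthogonal ?_ ?_).symm
  · exact T.orthogonal_ker ▸ Submodule.le_topologicalClosure _ ⟨u, rfl⟩
  · refine T.ker.le_orthogonal_orthogonal ?_
    simp [h]

end ContinuousLinearMap

theorem projection_formula_finite_codim_range_general
    {H K : Type*} [NormedAddCommGroup H] [InnerProductSpace ℂ H] [CompleteSpace H]
    [NormedAddCommGroup K] [InnerProductSpace ℂ K] [CompleteSpace K]
    (T : H →L[ℂ] K)
    (hN : IsClosed ((LinearMap.range (T : H →ₗ[ℂ] K) : Submodule ℂ K) : Set K))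
    (G : K →L[ℂ] K)
    (hG1 : ∀ x ∈ LinearMap.range (T : H →ₗ[ℂ] K), G x = T ((adjoint T) x))
    (hG2 : ∀ x ∈ (LinearMap.range (T : H →ₗ[ℂ] K))ᗮ, G x = x)
    (P : H →L[ℂ] H)
    (hP1 : ∀ x, P x ∈ (LinearMap.ker (T : H →ₗ[ℂ] K))ᗮ)
    (hP2 : ∀ x, x - P x ∈ ((LinearMap.ker (T : H →ₗ[ℂ] K))ᗮ)ᗮ) :
    ∃ G' : K →L[ℂ] K, G ∘L G' = 1 ∧ G' ∘L G = 1 ∧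
      ∀ f g : H, ⟪P f, g⟫_ℂ = ⟪G' (T f), T g⟫_ℂ := by
  have : CompleteSpace T.range := hN.completeSpace_coe
  have hG := T.eq_self_comp_adjoint_add_starProjection hG1 hG2
  have hG_unit : IsUnit G := hG ▸ T.isUnit_self_comp_adjoint_add_starProjection
  set G' : K →L[ℂ] K := ↑hG_unit.unit⁻¹
  have hGG' : G ∘L G' = 1 := hG_unit.mul_val_inv
  refine ⟨G', hGG', hG_unit.val_inv_mul, fun f g => ?_⟩
  have hP : P f = T.kerᗮ.starProjection f :=
    (Submodule.eq_starProjection_of_mem_orthogonal (hP1 f) (hP2 f)).symm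
  have hG' : (T ∘L adjoint T + T.rangeᗮ.starProjection) (G' (T f)) = T f := by
    rw [← hG, ← comp_apply, hGG', one_apply_eq_self]
  have hTT' := T.apply_adjoint_eq_of_self_comp_adjoint_add_starProjection_eq hG'
  rw [hP, ← T.adjoint_apply_eq_starProjection_orthogonal_ker hTT', adjoint_inner_left]

/-- Let `T : H → K` be bounded with closed range `N = ran T` of finite codimension.
If `G : K → K` agrees with `T T*` on `N` and with the identity on `Nᗮ`, then `G` is
invertible and `⟨P f, g⟩ = ⟨G⁻¹ T f, T g⟩` for all `f, g ∈ H`, where `P` is the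
orthogonal projection onto `(ker T)ᗮ`. -/
theorem projection_formula_finite_codim_range
    {H K : Type*} [NormedAddCommGroup H] [InnerProductSpace ℂ H] [CompleteSpace H]
    [NormedAddCommGroup K] [InnerProductSpace ℂ K] [CompleteSpace K]
    (T : H →L[ℂ] K)
    (hN : IsClosed ((LinearMap.range (T : H →ₗ[ℂ] K) : Submodule ℂ K) : Set K))
    (hcodim : FiniteDimensional ℂ ((LinearMap.range (T : H →ₗ[ℂ] K))ᗮ))
    (G : K →L[ℂ] K)
    (hG1 : ∀ x ∈ LinearMap.range (T : H →ₗ[ℂ] K), G x = T ((adjoint T) x))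
    (hG2 : ∀ x ∈ (LinearMap.range (T : H →ₗ[ℂ] K))ᗮ, G x = x)
    (P : H →L[ℂ] H)
    (hP1 : ∀ x, P x ∈ (LinearMap.ker (T : H →ₗ[ℂ] K))ᗮ)
    (hP2 : ∀ x, x - P x ∈ ((LinearMap.ker (T : H →ₗ[ℂ] K))ᗮ)ᗮ) :
    ∃ G' : K →L[ℂ] K, G ∘L G' = 1 ∧ G' ∘L G = 1 ∧
      ∀ f g : H, ⟪P f, g⟫_ℂ = ⟪G' (T f), T g⟫_ℂ :=
  projection_formula_finite_codim_range_general T hN G hG1 hG2 P hP1 hP2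
end
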